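/- Let V be a finite set, let (X_i : i ∈ V) be random variables with joint distribution P, and suppose P is restricted-faithful to a DMAG G* on V. If H is a DMAG that is an IMAP of P with skel(H) = skel(G*), then H and G* have the same unshielded colliders: for every triple of vertices i,k,j with i adjacent to k, k adjacent to j, and i not adjacent to j, the vertex k is a collider on the path (i,k,j) in H if and only if k is a collider on (i,k,j) in G*. -/

import Mathlib

open MeasureTheory ProbabilityTheory

/-- A mixed graph with directed and bidirected edges, no self-loops, and at most one
edge between any pair of vertices. -/
structure MixedGraph (V : Type*) where
  dir : V → V → Prop
  bidir : V → V → Prop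
  bidir_symm : ∀ i j, bidir i j → bidir j i
  dir_irrefl : ∀ i, ¬ dir i i
  bidir_irrefl : ∀ i, ¬ bidir i i
  not_dir_dir : ∀ i j, dir i j → ¬ dir j i
  not_dir_bidir : ∀ i j, dir i j → ¬ bidir i j

namespace MixedGraph

variable {V : Type*}

/-- `i` and `j` are adjacent (joined by some edge). -/
def adj (G : MixedGraph V) (i j : V) : Prop := G.dir i j ∨ G.dir j i ∨ G.bidir i j

lemma adj_symm (G : MixedGraph V) {i j : V} (h : G.adj i j) : G.adj j i := by
  rcases h with h | h | h
  · exact Or.inr (Or.inl h)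
  · exact Or.inl h
  · exact Or.inr (Or.inr (G.bidir_symm i j h))

/-- There is an edge between `a` and `k` with an arrowhead at `k`. -/
def arrowAt (G : MixedGraph V) (a k : V) : Prop := G.dir a k ∨ G.bidir a k

/-- `k` is a collider on the path segment `x - k - y`: both incident edges have an
arrowhead at `k`. -/
def IsCollider (G : MixedGraph V) (x k y : V) : Prop := G.arrowAt x k ∧ G.arrowAt y k

/-- `i` is an ancestor of `j`: there is a (possibly trivial) directed path from `i` to `j`. -/
def Anc (G : MixedGraph V) (i j : V) : Prop := Relation.ReflTransGen G.dir i j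

/-- There is a nonempty directed path from `i` to `j`. -/
def StrAnc (G : MixedGraph V) (i j : V) : Prop := Relation.TransGen G.dir i j

/-- `G` has no directed cycles. -/
def Acyclic (G : MixedGraph V) : Prop := ∀ i, ¬ G.StrAnc i i

/-- `G` is a directed ancestral graph: no directed cycles, and no directed path between
the endpoints of a bidirected edge. -/
def IsAncestral (G : MixedGraph V) : Prop :=
  G.Acyclic ∧ ∀ i j, G.bidir i j → ¬ G.StrAnc i j

end MixedGraph

/-- A path in a mixed graph from `a` to `b`: a nonempty list of distinct vertices,
consecutive ones adjacent. Since there is at most one edge between any pair of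
vertices, the list of vertices determines the edges of the path. -/
structure MPath {V : Type*} (G : MixedGraph V) (a b : V) where
  verts : List V
  ne_nil : verts ≠ []
  head_eq : verts.head ne_nil = a
  last_eq : verts.getLast ne_nil = b
  nodup : verts.Nodup
  chain : verts.Chain' G.adj

namespace MixedGraph

variable {V : Type*}

/-- The path `p` is m-connecting given `C`: every non-collider strictly inside `p` lies
outside `C` and every collider strictly inside `p` is an ancestor of some element of `C`. -/
def MConnecting (G : MixedGraph V) {a b : V} (C : Set V) (p : MPath G a b) : Prop :=
  ∀ (m : ℕ) (h : m + 2 < p.verts.length),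
    (G.IsCollider (p.verts[m]'(by omega)) (p.verts[m+1]'(by omega)) (p.verts[m+2]'h) →
        ∃ c ∈ C, G.Anc (p.verts[m+1]'(by omega)) c) ∧
    (¬ G.IsCollider (p.verts[m]'(by omega)) (p.verts[m+1]'(by omega)) (p.verts[m+2]'h) →
        p.verts[m+1]'(by omega) ∉ C)

/-- m-separation: `A ⊥_G B | C`, i.e. there is no m-connecting path given `C` from a
member of `A` to a member of `B`. -/
def MSep (G : MixedGraph V) (A B C : Set V) : Prop :=
  ∀ a ∈ A, ∀ b ∈ B, ∀ p : MPath G a b, ¬ G.MConnecting C p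

/-- `i` and `j` are m-connected given `C`: there is an m-connecting path between them. -/
def MConn (G : MixedGraph V) (i j : V) (C : Set V) : Prop :=
  (∃ p : MPath G i j, G.MConnecting C p) ∨ (∃ p : MPath G j i, G.MConnecting C p)

/-- A directed ancestral graph is maximal if every non-adjacent pair of vertices can be
m-separated by some set not containing either of them. -/
def IsMaximal (G : MixedGraph V) : Prop :=
  ∀ i j : V, i ≠ j → ¬ G.adj i j → ∃ S : Set V, i ∉ S ∧ j ∉ S ∧ G.MSep {i} {j} S

/-- A directed maximal ancestral graph. -/
def IsDMAG (G : MixedGraph V) : Prop := G.IsAncestral ∧ G.IsMaximal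

/-- `G` and `H` are Markov equivalent: they have the same m-separation statements,
`I(G) = I(H)`. -/
def MarkovEquiv (G H : MixedGraph V) : Prop :=
  ∀ A B C : Set V, Disjoint A B → Disjoint A C → Disjoint B C →
    (G.MSep A B C ↔ H.MSep A B C)

/-- The number of edges `|G| = |D| + |B|`; since there is at most one edge between any
pair of vertices this is the number of adjacent unordered pairs. -/
noncomputable def numEdges (G : MixedGraph V) : ℕ :=
  Nat.card {s : Sym2 V // ∃ i j : V, s = s(i, j) ∧ G.adj i j}

/-- `G` and `H` have the same skeleton. -/
def SameSkel (G H : MixedGraph V) : Prop := ∀ i j : V, G.adj i j ↔ H.adj i j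

/-- The path `p` from `i` to `j` is discriminating for `k`: `i,j` are non-adjacent, `k` is
the second-to-last vertex, there is at least one vertex strictly between `i` and `k`, and
every vertex strictly between `i` and `k` is a collider on the path and a parent of `j`. -/
def IsDiscriminatingFor (G : MixedGraph V) {i j : V} (p : MPath G i j) (k : V) : Prop :=
  ¬ G.adj i j ∧
  ∃ h4 : 4 ≤ p.verts.length,
    p.verts[p.verts.length - 2]'(by omega) = k ∧
    ∀ (m : ℕ) (_hm1 : 1 ≤ m) (_hm2 : m + 3 ≤ p.verts.length),
      G.IsCollider (p.verts[m-1]'(by omega)) (p.verts[m]'(by omega)) (p.verts[m+1]'(by omega)) ∧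
      G.dir (p.verts[m]'(by omega)) j

/-- The second-to-last vertex of the path `p` is a collider on `p`. -/
def ColliderAtSecondLast (G : MixedGraph V) {a b : V} (p : MPath G a b) : Prop :=
  ∃ _h3 : 3 ≤ p.verts.length,
    G.IsCollider (p.verts[p.verts.length - 3]'(by omega))
      (p.verts[p.verts.length - 2]'(by omega)) (p.verts[p.verts.length - 1]'(by omega))

/-- `i` and `j` cannot be m-separated in `G` by any set avoiding them. -/
def Insep (G : MixedGraph V) (i j : V) : Prop :=
  ∀ S : Set V, i ∉ S → j ∉ S → ¬ G.MSep {i} {j} S ∧ ¬ G.MSep {j} {i} S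

end MixedGraph

open MixedGraph

/-- The maximal closure `G̅` of an ancestral graph `G`: add an edge between every
non-adjacent inseparable pair, with the mark determined by the ancestor relations
(so that the result stays ancestral and has the same m-separations). -/
def maximalClosure {V : Type*} (G : MixedGraph V) : MixedGraph V where
  dir i j := G.dir i j ∨ (¬ G.adj i j ∧ i ≠ j ∧ G.Insep i j ∧ G.StrAnc i j ∧ ¬ G.StrAnc j i)
  bidir i j := G.bidir i j ∨ (¬ G.adj i j ∧ i ≠ j ∧ G.Insep i j ∧ ¬ G.StrAnc i j ∧ ¬ G.StrAnc j i)
  bidir_symm i j h := by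
    rcases h with h | ⟨hadj, hne, hins, h1, h2⟩
    · exact Or.inl (G.bidir_symm i j h)
    · exact Or.inr ⟨fun hc => hadj (G.adj_symm hc), hne.symm,
        fun S hS1 hS2 => (hins S hS2 hS1).symm, h2, h1⟩
  dir_irrefl i h := by
    rcases h with h | ⟨_, hne, _⟩
    · exact G.dir_irrefl i h
    · exact hne rfl
  bidir_irrefl i h := by
    rcases h with h | ⟨_, hne, _⟩
    · exact G.bidir_irrefl i h
    · exact hne rfl
  not_dir_dir i j h h' := by
    rcases h with h | ⟨hadj, hne, hins, h1, h2⟩ <;>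
      rcases h' with h' | ⟨hadj', hne', hins', h1', h2'⟩
    · exact G.not_dir_dir i j h h'
    · exact hadj' (Or.inr (Or.inl h))
    · exact hadj (Or.inr (Or.inl h'))
    · exact h2 h1'
  not_dir_bidir i j h h' := by
    rcases h with h | ⟨hadj, hne, hins, h1, h2⟩ <;>
      rcases h' with h' | ⟨hadj', hne', hins', h1', h2'⟩
    · exact G.not_dir_bidir i j h h'
    · exact hadj' (Or.inl h)
    · exact hadj (Or.inr (Or.inr h'))
    · exact h1' h1

/-- A partially ordered set structure (poset) on the ground set `V`: a reflexive,
transitive, antisymmetric relation. -/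
structure FinPoset (V : Type*) where
  le : V → V → Prop
  le_refl : ∀ a, le a a
  le_trans : ∀ a b c, le a b → le b c → le a c
  le_antisymm : ∀ a b, le a b → le b a → a = b

namespace FinPoset

/-- `pre_π(i,j) = {x : x ≤ i or x ≤ j}`. -/
def pre {V : Type*} (π : FinPoset V) (i j : V) : Set V := {x | π.le x i ∨ π.le x j}

lemma pre_comm {V : Type*} (π : FinPoset V) (i j : V) : π.pre j i = π.pre i j := by
  ext x; exact or_comm

end FinPoset

/-- The poset `po(G)` associated to an acyclic mixed graph: `i ≤ j` iff `i` is an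
ancestor of `j` in `G`. -/
def po {V : Type*} (G : MixedGraph V) (hG : G.Acyclic) : FinPoset V where
  le := G.Anc
  le_refl _ := Relation.ReflTransGen.refl
  le_trans _ _ _ h1 h2 := Relation.ReflTransGen.trans h1 h2
  le_antisymm a b hab hba := by
    by_contra hne
    rcases hab.cases_head with h | ⟨c, hac, hcb⟩
    · exact hne h
    · exact hG a (Relation.TransGen.head' hac (hcb.trans hba))

/-- The empty poset: all distinct elements are incomparable. -/
def emptyPoset (V : Type*) : FinPoset V :=
  ⟨Eq, fun _ => rfl, fun _ _ _ h1 h2 => h1.trans h2, fun _ _ h _ => h⟩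
section Probability

variable {V : Type*} {Ω : Type*} [MeasurableSpace Ω] [StandardBorelSpace Ω]

/-- Conditional independence `X_A ⊥⊥ X_B | X_C` under the distribution of the random
vector `X`: the joint random vectors `(X_i : i ∈ A)` and `(X_i : i ∈ B)` are
conditionally independent given the σ-algebra generated by `(X_i : i ∈ C)`. -/
def CI (μ : MeasureTheory.Measure Ω) [MeasureTheory.IsFiniteMeasure μ]
    (X : V → Ω → ℝ) (hX : ∀ i, Measurable (X i)) (A B C : Set V) : Prop :=
  ProbabilityTheory.CondIndepFun
    (MeasurableSpace.comap (fun ω => fun i : C => X i ω) MeasurableSpace.pi)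
    (Measurable.comap_le (measurable_pi_iff.mpr fun i : C => hX i))
    (fun ω => fun i : A => X i ω) (fun ω => fun i : B => X i ω) μ

/-- `X_i` and `X_j` are conditionally dependent given `X_S` (stated symmetrically). -/
def CondDep (μ : MeasureTheory.Measure Ω) [MeasureTheory.IsFiniteMeasure μ]
    (X : V → Ω → ℝ) (hX : ∀ i, Measurable (X i)) (i j : V) (S : Set V) : Prop :=
  ¬ CI μ X hX {i} {j} S ∨ ¬ CI μ X hX {j} {i} S

variable (μ : MeasureTheory.Measure Ω) [MeasureTheory.IsFiniteMeasure μ]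
    (X : V → Ω → ℝ) (hX : ∀ i, Measurable (X i))

/-- `G` is an independence map (IMAP) of the distribution of `X`: every m-separation in
`G` implies the corresponding conditional independence. -/
def IsIMAP (G : MixedGraph V) : Prop :=
  ∀ A B C : Set V, Disjoint A B → Disjoint A C → Disjoint B C →
    G.MSep A B C → CI μ X hX A B C

/-- Delete the directed edge `i → j` from `G`. -/
def deleteDir {V : Type*} (G : MixedGraph V) (i j : V) : MixedGraph V where
  dir a b := G.dir a b ∧ ¬(a = i ∧ b = j)
  bidir := G.bidir
  bidir_symm := G.bidir_symm
  dir_irrefl a h := G.dir_irrefl a h.1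
  bidir_irrefl := G.bidir_irrefl
  not_dir_dir a b h h' := G.not_dir_dir a b h.1 h'.1
  not_dir_bidir a b h := G.not_dir_bidir a b h.1

/-- Delete the bidirected edge `i ↔ j` from `G`. -/
def deleteBidir {V : Type*} (G : MixedGraph V) (i j : V) : MixedGraph V where
  dir := G.dir
  bidir a b := G.bidir a b ∧ ¬((a = i ∧ b = j) ∨ (a = j ∧ b = i))
  bidir_symm a b h := ⟨G.bidir_symm a b h.1, by tauto⟩
  dir_irrefl := G.dir_irrefl
  bidir_irrefl a h := G.bidir_irrefl a h.1
  not_dir_dir := G.not_dir_dir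
  not_dir_bidir a b h h' := G.not_dir_bidir a b h h'.1

/-- `G` is a minimal IMAP of the distribution of `X`: `G` is a DMAG and an IMAP, and no
single edge of `G` can be deleted while keeping the graph both maximal and an IMAP. -/
def IsMinimalIMAP (G : MixedGraph V) : Prop :=
  G.IsDMAG ∧ IsIMAP μ X hX G ∧
  (∀ i j, G.dir i j →
    ¬((deleteDir G i j).IsMaximal ∧ IsIMAP μ X hX (deleteDir G i j))) ∧
  (∀ i j, G.bidir i j →
    ¬((deleteBidir G i j).IsMaximal ∧ IsIMAP μ X hX (deleteBidir G i j)))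

/-- Adjacency-faithfulness: endpoints of any edge of `G` are conditionally dependent
given any set avoiding them. -/
def AdjFaithful (G : MixedGraph V) : Prop :=
  ∀ i j, G.adj i j → ∀ S : Set V, i ∉ S → j ∉ S → CondDep μ X hX i j S

/-- Orientation-faithfulness: for any unshielded triple `i - k - j` of the skeleton of
`G`, if `i` and `j` are m-connected given `S` then `X_i` and `X_j` are conditionally
dependent given `X_S`. -/
def OrientFaithful (G : MixedGraph V) : Prop :=
  ∀ i k j : V, i ≠ j → G.adj i k → G.adj k j → ¬ G.adj i j →
    ∀ S : Set V, i ∉ S → j ∉ S → G.MConn i j S → CondDep μ X hX i j S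

/-- Discriminating-faithfulness: for the endpoints `i, j` of any discriminating path of
`G`, if `i` and `j` are m-connected given `S` then `X_i` and `X_j` are conditionally
dependent given `X_S`. -/
def DiscrFaithful (G : MixedGraph V) : Prop :=
  ∀ (i j k : V) (p : MPath G i j), G.IsDiscriminatingFor p k →
    ∀ S : Set V, i ∉ S → j ∉ S → G.MConn i j S → CondDep μ X hX i j S

/-- The distribution of `X` is restricted-faithful to `G`. -/
def RestrictedFaithful (G : MixedGraph V) : Prop :=
  IsIMAP μ X hX G ∧ AdjFaithful μ X hX G ∧ OrientFaithful μ X hX G ∧ DiscrFaithful μ X hX G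

/-- The distribution of `X` is faithful to `G`: m-separation holds iff the corresponding
conditional independence holds. -/
def Faithful (G : MixedGraph V) : Prop :=
  ∀ A B C : Set V, Disjoint A B → Disjoint A C → Disjoint B C →
    (G.MSep A B C ↔ CI μ X hX A B C)

/-- The graph `AG(π, P)` associated to a poset `π` and the distribution `P` of `X`. -/
def AGdist (π : FinPoset V) : MixedGraph V where
  dir i j := π.le i j ∧ i ≠ j ∧ CondDep μ X hX i j (π.pre i j \ {i, j})
  bidir i j := ¬ π.le i j ∧ ¬ π.le j i ∧ CondDep μ X hX i j (π.pre i j \ {i, j})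
  bidir_symm i j h := by
    refine ⟨h.2.1, h.1, ?_⟩
    rw [π.pre_comm, Set.pair_comm j i]
    exact h.2.2.symm
  dir_irrefl i h := h.2.1 rfl
  bidir_irrefl i h := h.1 (π.le_refl i)
  not_dir_dir i j h h' := h.2.1 (π.le_antisymm i j h.1 h'.1)
  not_dir_bidir i j h h' := h'.1 h.1

lemma AGdist_acyclic (π : FinPoset V) : (AGdist μ X hX π).Acyclic := by
  have key : ∀ a b, (AGdist μ X hX π).StrAnc a b → π.le a b ∧ a ≠ b := by
    intro a b h
    induction h with
    | single h => exact ⟨h.1, h.2.1⟩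
    | tail _ h2 ih =>
        refine ⟨π.le_trans _ _ _ ih.1 h2.1, fun hac => ?_⟩
        subst hac
        exact h2.2.1 (π.le_antisymm _ _ h2.1 ih.1)
  exact fun i hi => (key i i hi).2 rfl

/-- `G_π`: the maximal closure of `AG(po(AG(π, P)), P)`, a minimal IMAP of the
distribution `P` of `X` associated to the poset `π`. -/
def Gpi (π : FinPoset V) : MixedGraph V :=
  maximalClosure (AGdist μ X hX (po (AGdist μ X hX π) (AGdist_acyclic μ X hX π)))

end Probability

section GraphVersion

variable {V : Type*}

/-- The graph `AG(π, G)` associated to a poset `π`, with conditional (in)dependence read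
off from m-separation in a graph `G` (used when the distribution is faithful to `G`). -/
def AGgraph (π : FinPoset V) (G : MixedGraph V) : MixedGraph V where
  dir i j := π.le i j ∧ i ≠ j ∧ G.MConn i j (π.pre i j \ {i, j})
  bidir i j := ¬ π.le i j ∧ ¬ π.le j i ∧ G.MConn i j (π.pre i j \ {i, j})
  bidir_symm i j h := by
    refine ⟨h.2.1, h.1, ?_⟩
    rw [π.pre_comm, Set.pair_comm j i]
    exact h.2.2.symm
  dir_irrefl i h := h.2.1 rfl
  bidir_irrefl i h := h.1 (π.le_refl i)
  not_dir_dir i j h h' := h.2.1 (π.le_antisymm i j h.1 h'.1)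
  not_dir_bidir i j h h' := h'.1 h.1

/-- `H` is an independence map of the graph `G`: every m-separation of `H` is an
m-separation of `G`. -/
def GraphIMAP (H G : MixedGraph V) : Prop :=
  ∀ A B C : Set V, Disjoint A B → Disjoint A C → Disjoint B C →
    H.MSep A B C → G.MSep A B C

/-- A complete DMAG: a DMAG whose skeleton is the complete graph. -/
def IsCompleteDMAG (G : MixedGraph V) : Prop :=
  G.IsDMAG ∧ ∀ i j : V, i ≠ j → G.adj i j

end GraphVersion

/-!
Maximality of `H` separates the endpoints of an unshielded triple `i - k - j` by some `S`,
so `X_i ⊥⊥ X_j | X_S` since `H` is an IMAP. Orientation-faithfulness then forbids `i, j`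
from being m-connected given `S` in `G*` either. In any graph where `i, j` are m-separated
by `S`, the path `i - k - j` itself must be blocked, which forces `k` to be a collider
exactly when `k ∉ S`; so both graphs agree on whether `k` is a collider.
-/

namespace MixedGraph

variable {V : Type*} {G : MixedGraph V} {i j : V}

lemma ne_of_adj (h : G.adj i j) : i ≠ j := by
  rintro rfl
  rcases h with h | h | h
  · exact G.dir_irrefl i h
  · exact G.dir_irrefl i h
  · exact G.bidir_irrefl i h

end MixedGraph

namespace MPath

variable {V : Type*} {G : MixedGraph V} {i k j : V}

def triple (hik : G.adj i k) (hkj : G.adj k j) (hij : i ≠ j) : MPath G i j where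
  verts := [i, k, j]
  ne_nil := by simp
  head_eq := rfl
  last_eq := rfl
  nodup := by simp [MixedGraph.ne_of_adj hik, hij, MixedGraph.ne_of_adj hkj]
  chain := List.isChain_cons_cons.2 ⟨hik, List.isChain_pair.2 hkj⟩

end MPath

namespace MixedGraph

variable {V : Type*} {G : MixedGraph V} {i k j : V} {S : Set V}

lemma mConnecting_triple_iff (hik : G.adj i k) (hkj : G.adj k j) (hij : i ≠ j) :
    G.MConnecting S (MPath.triple hik hkj hij) ↔
      (G.IsCollider i k j → ∃ c ∈ S, G.Anc k c) ∧ (¬ G.IsCollider i k j → k ∉ S) := by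
  constructor
  · intro h
    exact h 0 (by simp [MPath.triple])
  · intro h m hm
    obtain rfl : m = 0 := by
      simp only [MPath.triple, List.length_cons, List.length_nil] at hm
      omega
    exact h

lemma isCollider_iff_not_mem_of_mSep (hik : G.adj i k) (hkj : G.adj k j) (hij : i ≠ j)
    (hsep : G.MSep {i} {j} S) : G.IsCollider i k j ↔ k ∉ S := by
  have blocked := hsep i rfl j rfl (MPath.triple hik hkj hij)
  rw [mConnecting_triple_iff] at blocked
  constructor
  · intro hcol hkS
    exact blocked ⟨fun _ => ⟨k, hkS, Relation.ReflTransGen.refl⟩, fun hncol => absurd hcol hncol⟩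
  · intro hkS
    by_contra hncol
    exact blocked ⟨fun hcol => absurd hcol hncol, fun _ => hkS⟩

lemma mSep_singleton_of_not_mConn (h : ¬ G.MConn i j S) : G.MSep {i} {j} S := by
  rintro _ rfl _ rfl p hp
  exact h (Or.inl ⟨p, hp⟩)

end MixedGraph

section Probability

variable {V : Type*} {Ω : Type*} [MeasurableSpace Ω] [StandardBorelSpace Ω]
  {μ : MeasureTheory.Measure Ω} [MeasureTheory.IsFiniteMeasure μ]
  {X : V → Ω → ℝ} {hX : ∀ i, Measurable (X i)}

lemma not_condDep_of_CI {i j : V} {S : Set V} (h : CI μ X hX {i} {j} S) :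
    ¬ CondDep μ X hX i j S := by
  rintro (hdep | hdep)
  · exact hdep h
  · exact hdep (ProbabilityTheory.CondIndepFun.symm h)

lemma IsIMAP.not_condDep_of_mSep {G : MixedGraph V} (hG : IsIMAP μ X hX G) {i j : V}
    {S : Set V} (hij : i ≠ j) (hiS : i ∉ S) (hjS : j ∉ S) (hsep : G.MSep {i} {j} S) :
    ¬ CondDep μ X hX i j S :=
  not_condDep_of_CI <| hG {i} {j} S (by simpa using hij) (by simpa using hiS)
    (by simpa using hjS) hsep

end Probability

theorem same_unshielded_colliders_general {V : Type*} {Ω : Type*} [MeasurableSpace Ω]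
    [StandardBorelSpace Ω] (μ : MeasureTheory.Measure Ω)
    [MeasureTheory.IsProbabilityMeasure μ] (X : V → Ω → ℝ) (hX : ∀ i, Measurable (X i))
    (Gstar : MixedGraph V)
    (hfaith : RestrictedFaithful μ X hX Gstar)
    (H : MixedGraph V) (hH : H.IsDMAG) (hImap : IsIMAP μ X hX H)
    (hskel : H.SameSkel Gstar) :
    ∀ i k j : V, i ≠ j → H.adj i k → H.adj k j → ¬ H.adj i j →
      (H.IsCollider i k j ↔ Gstar.IsCollider i k j) := by
  intro i k j hij hik hkj hnadj
  have hik' := (hskel i k).mp hik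
  have hkj' := (hskel k j).mp hkj
  obtain ⟨S, hiS, hjS, hsepH⟩ := hH.2 i j hij hnadj
  have hindep := hImap.not_condDep_of_mSep hij hiS hjS hsepH
  have hsepG : Gstar.MSep {i} {j} S := mSep_singleton_of_not_mConn fun hconn =>
    hindep (hfaith.2.2.1 i k j hij hik' hkj' (mt (hskel i j).mpr hnadj) S hiS hjS hconn)
  rw [isCollider_iff_not_mem_of_mSep hik hkj hij hsepH,
    isCollider_iff_not_mem_of_mSep hik' hkj' hij hsepG]

/-- under restricted-faithfulness, any DMAG IMAP with the same skeleton
as `G*` has the same unshielded colliders as `G*`. -/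
theorem same_unshielded_colliders {V : Type*} [Fintype V] {Ω : Type*} [MeasurableSpace Ω]
    [StandardBorelSpace Ω] [Nonempty Ω] (μ : MeasureTheory.Measure Ω)
    [MeasureTheory.IsProbabilityMeasure μ] (X : V → Ω → ℝ) (hX : ∀ i, Measurable (X i))
    (Gstar : MixedGraph V) (hGstar : Gstar.IsDMAG)
    (hfaith : RestrictedFaithful μ X hX Gstar)
    (H : MixedGraph V) (hH : H.IsDMAG) (hImap : IsIMAP μ X hX H)
    (hskel : H.SameSkel Gstar) :
    ∀ i k j : V, i ≠ j → H.adj i k → H.adj k j → ¬ H.adj i j →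
      (H.IsCollider i k j ↔ Gstar.IsCollider i k j) :=
  same_unshielded_colliders_general μ X hX Gstar hfaith H hH hImap hskel
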